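/- arXiv:2605.28019 — 5 statements merged into one kernel-verified Lean document; each statement's English description precedes it below -/
import Mathlib

section
/- For integers l, m, n ≥ 2, the ternary quadratic form q(a₁,a₂,a₃) = -(a₁² + a₂² + a₃²) + 2m·a₁a₃ + 2n·a₂a₃ + 2l·a₁a₂ represents 0 nontrivially over ℚ if and only if the form (l² - 1)x² + D·y² - z² with D = l² + m² + n² + 2lmn - 1 represents 0 nontrivially over ℚ. -/
theorem stmt6 (l m n : ℤ) (hl : 2 ≤ l) (hm : 2 ≤ m) (hn : 2 ≤ n) :
    (∃ a₁ a₂ a₃ : ℚ, (a₁, a₂, a₃) ≠ (0, 0, 0) ∧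
      -(a₁ ^ 2 + a₂ ^ 2 + a₃ ^ 2) + 2 * (m : ℚ) * a₁ * a₃ + 2 * (n : ℚ) * a₂ * a₃
        + 2 * (l : ℚ) * a₁ * a₂ = 0) ↔
    (∃ x y z : ℚ, (x, y, z) ≠ (0, 0, 0) ∧
      ((l : ℚ) ^ 2 - 1) * x ^ 2
        + ((l : ℚ) ^ 2 + (m : ℚ) ^ 2 + (n : ℚ) ^ 2 + 2 * l * m * n - 1) * y ^ 2
        - z ^ 2 = 0) := by
  have hL : (2 : ℚ) ≤ (l : ℚ) := by exact_mod_cast hl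
  have hK : ((l : ℚ) ^ 2 - 1) ≠ 0 := by nlinarith
  constructor
  · rintro ⟨a₁, a₂, a₃, hne, hq⟩
    refine ⟨a₁ - l * a₂ - m * a₃, a₃, ((l : ℚ) ^ 2 - 1) * a₂ + (l * m + n) * a₃, ?_, ?_⟩
    · intro h
      rw [Prod.mk.injEq, Prod.mk.injEq] at h
      obtain ⟨hx, hy, hz⟩ := h
      apply hne
      have ha3 : a₃ = 0 := hy
      have ha2 : a₂ = 0 := by
        have := hz
        rw [ha3] at this
        simp at this
        rcases this with h | h
        · exact absurd h hK
        · exact h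
      have ha1 : a₁ = 0 := by
        have := hx
        rw [ha2, ha3] at this
        linarith [this]
      simp [ha1, ha2, ha3]
    · linear_combination (-(((l : ℚ) ^ 2 - 1))) * hq
  · rintro ⟨x, y, z, hne, hq⟩
    refine ⟨((l : ℚ) ^ 2 - 1) * x + l * (z - (l * m + n) * y) + m * (((l : ℚ) ^ 2 - 1) * y),
      z - (l * m + n) * y, ((l : ℚ) ^ 2 - 1) * y, ?_, ?_⟩
    · intro h
      rw [Prod.mk.injEq, Prod.mk.injEq] at h
      obtain ⟨h1, h2, h3⟩ := h
      apply hne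
      have hy : y = 0 := by
        rcases mul_eq_zero.mp h3 with h | h
        · exact absurd h hK
        · exact h
      have hz : z = 0 := by rw [hy] at h2; linarith [h2]
      have hx : x = 0 := by
        rw [hy, hz] at h1
        simp at h1
        rcases h1 with h | h
        · exact absurd h hK
        · exact h
      simp [hx, hy, hz]
    · linear_combination (-(((l : ℚ) ^ 2 - 1))) * hq
end

section
/- For integers m₁, ..., m₅ ≥ 2, the real quadratic form q(a₁,a₂,a₃,a₄) = -(a₁² + a₂² + a₃² + a₄²) + 2(m₁a₁a₃ + m₂a₁a₄ + m₃a₂a₃ + m₄a₂a₄ + m₅a₃a₄) has signature (1,3) if and only if (m₁m₂ + m₃m₄ + m₅)² > (m₁² + m₃² - 1)(m₂² + m₄² - 1). -/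
set_option maxHeartbeats 1000000


/-- A real quadratic map `q` on `Fin 4 → ℝ` has signature (1,3) if after an
invertible linear change of variables it becomes a diagonal form with one
positive and three negative coefficients. -/
def HasSignatureOneThree (q : (Fin 4 → ℝ) → ℝ) : Prop :=
  ∃ (T : (Fin 4 → ℝ) ≃ₗ[ℝ] (Fin 4 → ℝ)) (w : Fin 4 → ℝ),
    0 < w 0 ∧ (∀ i : Fin 4, i ≠ 0 → w i < 0) ∧
    ∀ a : Fin 4 → ℝ, q a = ∑ i : Fin 4, w i * (T a i) ^ 2

theorem stmt11 (m₁ m₂ m₃ m₄ m₅ : ℤ)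
    (h₁ : 2 ≤ m₁) (h₂ : 2 ≤ m₂) (h₃ : 2 ≤ m₃) (h₄ : 2 ≤ m₄) (h₅ : 2 ≤ m₅) :
    HasSignatureOneThree (fun a : Fin 4 → ℝ =>
      -(a 0 ^ 2 + a 1 ^ 2 + a 2 ^ 2 + a 3 ^ 2)
        + 2 * ((m₁ : ℝ) * a 0 * a 2 + (m₂ : ℝ) * a 0 * a 3
          + (m₃ : ℝ) * a 1 * a 2 + (m₄ : ℝ) * a 1 * a 3
          + (m₅ : ℝ) * a 2 * a 3)) ↔
    (m₁ * m₂ + m₃ * m₄ + m₅) ^ 2 > (m₁ ^ 2 + m₃ ^ 2 - 1) * (m₂ ^ 2 + m₄ ^ 2 - 1) := by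
  have r₁ : (2:ℝ) ≤ (m₁:ℝ) := by exact_mod_cast h₁
  have r₂ : (2:ℝ) ≤ (m₂:ℝ) := by exact_mod_cast h₂
  have r₃ : (2:ℝ) ≤ (m₃:ℝ) := by exact_mod_cast h₃
  have r₄ : (2:ℝ) ≤ (m₄:ℝ) := by exact_mod_cast h₄
  have hApos : (0:ℝ) < (m₁:ℝ)^2 + (m₃:ℝ)^2 - 1 := by nlinarith
  constructor
  · -- forward direction
    rintro ⟨T, w, hw0, hwneg, hq⟩
    by_contra hcon
    push_neg at hcon
    have hAC : ((m₁:ℝ)*(m₂:ℝ) + (m₃:ℝ)*(m₄:ℝ) + (m₅:ℝ))^2 ≤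
        ((m₁:ℝ)^2 + (m₃:ℝ)^2 - 1) * ((m₂:ℝ)^2 + (m₄:ℝ)^2 - 1) := by
      exact_mod_cast hcon
    set v₂ : Fin 4 → ℝ := ![m₁, m₃, 1, 0] with hv₂
    set v₃ : Fin 4 → ℝ := ![m₂, m₄, 0, 1] with hv₃
    obtain ⟨s, t, hst, hf⟩ : ∃ s t : ℝ, ¬(s = 0 ∧ t = 0) ∧
        s * T v₂ 0 + t * T v₃ 0 = 0 := by
      by_cases h2 : T v₂ 0 = 0
      · exact ⟨1, 0, by simp, by simp [h2]⟩
      · exact ⟨T v₃ 0, -(T v₂ 0), fun h => h2 (by simpa using h.2), by ring⟩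
    set v : Fin 4 → ℝ := s • v₂ + t • v₃ with hv
    have hvc : ∀ i, v i = s * v₂ i + t * v₃ i := by
      intro i; simp [hv]
    have hv0 : v 0 = s * m₁ + t * m₂ := by rw [hvc]; simp [hv₂, hv₃]
    have hv1 : v 1 = s * m₃ + t * m₄ := by rw [hvc]; simp [hv₂, hv₃]
    have hv2' : v 2 = s := by rw [hvc]; simp [hv₂, hv₃]
    have hv3' : v 3 = t := by rw [hvc]; simp [hv₂, hv₃]
    have hTv : T v = s • T v₂ + t • T v₃ := by
      rw [hv, map_add, map_smul, map_smul]
    have hTv0 : T v 0 = 0 := by rw [hTv]; simpa using hf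
    have hqv : -(v 0 ^ 2 + v 1 ^ 2 + v 2 ^ 2 + v 3 ^ 2)
        + 2 * ((m₁ : ℝ) * v 0 * v 2 + (m₂ : ℝ) * v 0 * v 3
          + (m₃ : ℝ) * v 1 * v 2 + (m₄ : ℝ) * v 1 * v 3
          + (m₅ : ℝ) * v 2 * v 3) = ∑ i : Fin 4, w i * (T v i) ^ 2 := hq v
    have hqval : -(v 0 ^ 2 + v 1 ^ 2 + v 2 ^ 2 + v 3 ^ 2)
        + 2 * ((m₁ : ℝ) * v 0 * v 2 + (m₂ : ℝ) * v 0 * v 3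
          + (m₃ : ℝ) * v 1 * v 2 + (m₄ : ℝ) * v 1 * v 3
          + (m₅ : ℝ) * v 2 * v 3)
        = ((m₁:ℝ)^2 + (m₃:ℝ)^2 - 1) * s^2
          + 2 * ((m₁:ℝ)*(m₂:ℝ) + (m₃:ℝ)*(m₄:ℝ) + (m₅:ℝ)) * s * t
          + ((m₂:ℝ)^2 + (m₄:ℝ)^2 - 1) * t^2 := by
      rw [hv0, hv1, hv2', hv3']; ring
    have hqnn : 0 ≤ ((m₁:ℝ)^2 + (m₃:ℝ)^2 - 1) * s^2
          + 2 * ((m₁:ℝ)*(m₂:ℝ) + (m₃:ℝ)*(m₄:ℝ) + (m₅:ℝ)) * s * t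
          + ((m₂:ℝ)^2 + (m₄:ℝ)^2 - 1) * t^2 := by
      nlinarith [sq_nonneg (((m₁:ℝ)^2 + (m₃:ℝ)^2 - 1) * s
          + ((m₁:ℝ)*(m₂:ℝ) + (m₃:ℝ)*(m₄:ℝ) + (m₅:ℝ)) * t),
        sq_nonneg t, hApos, hAC]
    rw [hqval, Fin.sum_univ_four, hTv0] at hqv
    have hw1 := hwneg 1 (by decide)
    have hw2 := hwneg 2 (by decide)
    have hw3 := hwneg 3 (by decide)
    have e1 : w 1 * (T v 1)^2 ≤ 0 :=
      mul_nonpos_iff.mpr (Or.inr ⟨hw1.le, sq_nonneg _⟩)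
    have e2 : w 2 * (T v 2)^2 ≤ 0 :=
      mul_nonpos_iff.mpr (Or.inr ⟨hw2.le, sq_nonneg _⟩)
    have e3 : w 3 * (T v 3)^2 ≤ 0 :=
      mul_nonpos_iff.mpr (Or.inr ⟨hw3.le, sq_nonneg _⟩)
    have hT1 : T v 1 = 0 := by
      by_contra hne
      have hp : 0 < (T v 1)^2 := by positivity
      linarith [mul_neg_of_neg_of_pos hw1 hp]
    have hT2 : T v 2 = 0 := by
      by_contra hne
      have hp : 0 < (T v 2)^2 := by positivity
      linarith [mul_neg_of_neg_of_pos hw2 hp]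
    have hT3 : T v 3 = 0 := by
      by_contra hne
      have hp : 0 < (T v 3)^2 := by positivity
      linarith [mul_neg_of_neg_of_pos hw3 hp]
    have hTz : T v = 0 := by
      funext i; fin_cases i
      · exact hTv0
      · exact hT1
      · exact hT2
      · exact hT3
    have hvz : v = 0 := (LinearEquiv.map_eq_zero_iff T).mp hTz
    exact hst ⟨by rw [← hv2', hvz]; rfl, by rw [← hv3', hvz]; rfl⟩
  · -- backward direction
    intro hD
    have hDr : ((m₁:ℝ)^2 + (m₃:ℝ)^2 - 1) * ((m₂:ℝ)^2 + (m₄:ℝ)^2 - 1) <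
        ((m₁:ℝ)*(m₂:ℝ) + (m₃:ℝ)*(m₄:ℝ) + (m₅:ℝ))^2 := by exact_mod_cast hD
    set A : ℝ := (m₁:ℝ)^2 + (m₃:ℝ)^2 - 1 with hA
    set B : ℝ := (m₁:ℝ)*(m₂:ℝ) + (m₃:ℝ)*(m₄:ℝ) + (m₅:ℝ) with hB
    set C : ℝ := (m₂:ℝ)^2 + (m₄:ℝ)^2 - 1 with hC
    have hAne : A ≠ 0 := ne_of_gt hApos
    refine ⟨{ toFun := fun a => ![a 2 + (B/A) * a 3,
                a 0 - (m₁:ℝ) * a 2 - (m₂:ℝ) * a 3,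
                a 1 - (m₃:ℝ) * a 2 - (m₄:ℝ) * a 3, a 3],
              map_add' := ?_, map_smul' := ?_,
              invFun := fun y => ![y 1 + (m₁:ℝ) * (y 0 - (B/A) * y 3) + (m₂:ℝ) * y 3,
                y 2 + (m₃:ℝ) * (y 0 - (B/A) * y 3) + (m₄:ℝ) * y 3,
                y 0 - (B/A) * y 3, y 3],
              left_inv := ?_, right_inv := ?_ },
      ![A, -1, -1, -((B^2 - A*C)/A)], ?_, ?_, ?_⟩
    · intro a b; funext i; fin_cases i <;> simp <;> ring
    · intro c a; funext i; fin_cases i <;> simp <;> ring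
    · intro a; funext i; fin_cases i <;> simp <;> ring
    · intro y; funext i; fin_cases i <;> simp <;> ring
    · simpa using hApos
    · intro i hi; fin_cases i
      · exact absurd rfl hi
      · norm_num
      · norm_num
      · show -((B^2 - A*C)/A) < 0
        have : 0 < (B^2 - A*C)/A := div_pos (by linarith) hApos
        linarith
    · intro a
      simp only [LinearEquiv.coe_mk, LinearMap.coe_mk, AddHom.coe_mk]
      rw [Fin.sum_univ_four]
      simp only [Matrix.cons_val_zero, Matrix.cons_val_one, Matrix.head_cons,
        Matrix.cons_val_two, Matrix.tail_cons, Matrix.cons_val_three]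
      field_simp
      ring
end

section
/- With m₁ = 6, m₂ = 2, m₃ = 7, m₄ = 2, m₅ = 9 (so A = 84, B = 35, C = 7), the quadratic form -84x₁² - 84x₂² + y₃² - 637·y₄² has no nontrivial zero over ℚ₇ (equivalently, 84x₁² + 84x₂² + 637y₄² = y₃² has only the trivial 7-adic solution). -/
/-!
Rescaling a nonzero zero by the inverse of its coordinate of largest norm gives an integral
zero with a unit coordinate. But 7 divides every coordinate of an integral zero: first `7 ∣ y₃`;
dividing the equation by 7 gives `7 ∣ x₁² + x₂²`, and as `-1` is not a square mod 7 this forces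
`7 ∣ x₁, x₂`; dividing by 7 again gives `(y₃/7)² ≡ 13 y₄² ≡ -y₄² (mod 7)`, whence `7 ∣ y₄`.
-/

instance : Fact (Nat.Prime 7) := ⟨by norm_num⟩

theorem ZMod.eq_zero_of_sq_add_sq_eq_zero {p : ℕ} [Fact p.Prime] (hp : p % 4 = 3) {x y : ZMod p}
    (h : x ^ 2 + y ^ 2 = 0) : y = 0 := by
  by_contra hy
  refine ZMod.exists_sq_eq_neg_one_iff.mp ⟨x / y, ?_⟩ hp
  field_simp
  linear_combination -h

namespace PadicInt

variable {p : ℕ} [Fact p.Prime]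

theorem toZMod_eq_zero_iff_dvd (x : ℤ_[p]) : toZMod x = 0 ↔ (p : ℤ_[p]) ∣ x := by
  rw [← RingHom.mem_ker, ker_toZMod, maximalIdeal_eq_span_p, Ideal.mem_span_singleton]

theorem dvd_of_dvd_sq_add_sq (hp : p % 4 = 3) {a b : ℤ_[p]} (h : (p : ℤ_[p]) ∣ a ^ 2 + b ^ 2) :
    (p : ℤ_[p]) ∣ a ∧ (p : ℤ_[p]) ∣ b := by
  rw [← toZMod_eq_zero_iff_dvd] at h
  simp only [← toZMod_eq_zero_iff_dvd]
  have h' : toZMod a ^ 2 + toZMod b ^ 2 = 0 := by simpa using h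
  exact ⟨ZMod.eq_zero_of_sq_add_sq_eq_zero hp (by rwa [add_comm] at h'),
    ZMod.eq_zero_of_sq_add_sq_eq_zero hp h'⟩

end PadicInt

namespace Padic

variable {p : ℕ} [Fact p.Prime] {ι : Type*} [Finite ι]

theorem eq_zero_of_forall_integral_mem_dvd {S : Set (ι → ℚ_[p])}
    (hS : ∀ (c : ℚ_[p]) (x : ι → ℚ_[p]), x ∈ S → c • x ∈ S)
    (hdvd : ∀ v : ι → ℤ_[p], (fun i ↦ (v i : ℚ_[p])) ∈ S → ∀ i, (p : ℤ_[p]) ∣ v i)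
    {x : ι → ℚ_[p]} (hx : x ∈ S) : x = 0 := by
  by_contra hne
  obtain ⟨j, hj⟩ := Function.ne_iff.mp hne
  have : Nonempty ι := ⟨j⟩
  obtain ⟨i, hi⟩ := Finite.exists_max fun i ↦ ‖x i‖
  have hxi : x i ≠ 0 := norm_pos_iff.mp ((norm_pos_iff.mpr hj).trans_le (hi j))
  have hle (k : ι) : ‖(x i)⁻¹ * x k‖ ≤ 1 := by
    rw [norm_mul, norm_inv]
    exact inv_mul_le_one_of_le₀ (hi k) (norm_nonneg _)
  let v : ι → ℤ_[p] := fun k ↦ ⟨(x i)⁻¹ * x k, hle k⟩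
  have hvi : ‖v i‖ = 1 := by
    change ‖(x i)⁻¹ * x i‖ = 1
    rw [inv_mul_cancel₀ hxi, norm_one]
  have := (PadicInt.norm_lt_one_iff_dvd (v i)).mpr (hdvd v (hS (x i)⁻¹ x hx) i)
  exact this.ne hvi

end Padic

variable {R : Type*} [CommRing R]

def form84_637 (v : Fin 4 → R) : R := -84 * v 0 ^ 2 - 84 * v 1 ^ 2 + v 2 ^ 2 - 637 * v 3 ^ 2

theorem form84_637_smul (c : R) (v : Fin 4 → R) : form84_637 (c • v) = c ^ 2 * form84_637 v := by
  simp only [form84_637, Pi.smul_apply, smul_eq_mul]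
  ring

theorem map_form84_637 {S : Type*} [CommRing S] (f : R →+* S) (v : Fin 4 → R) :
    form84_637 (fun i ↦ f (v i)) = f (form84_637 v) := by
  simp only [form84_637, map_sub, map_add, map_mul, map_neg, map_pow, map_ofNat]

theorem seven_dvd_of_form84_637_eq_zero {v : Fin 4 → ℤ_[7]} (h : form84_637 v = 0) :
    ∀ i, (7 : ℤ_[7]) ∣ v i := by
  suffices ∀ a b c d : ℤ_[7], -84 * a ^ 2 - 84 * b ^ 2 + c ^ 2 - 637 * d ^ 2 = 0 →
      7 ∣ a ∧ 7 ∣ b ∧ 7 ∣ c ∧ 7 ∣ d by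
    obtain ⟨h₀, h₁, h₂, h₃⟩ := this _ _ _ _ h
    intro i
    fin_cases i <;> assumption
  intro a b c d h
  have h7 : Prime (7 : ℤ_[7]) := by exact_mod_cast PadicInt.prime_p (p := 7)
  obtain ⟨t, rfl⟩ : (7 : ℤ_[7]) ∣ c :=
    h7.dvd_of_dvd_pow (n := 2) ⟨12 * a ^ 2 + 12 * b ^ 2 + 91 * d ^ 2, by linear_combination h⟩
  have h₁ : 7 * t ^ 2 = 12 * (a ^ 2 + b ^ 2) + 91 * d ^ 2 :=
    mul_left_cancel₀ h7.ne_zero (by linear_combination h)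
  have sq_add_sq (x y : ℤ_[7]) (hxy : 7 ∣ x ^ 2 + y ^ 2) : 7 ∣ x ∧ 7 ∣ y := by
    exact_mod_cast PadicInt.dvd_of_dvd_sq_add_sq (p := 7) rfl (by exact_mod_cast hxy)
  obtain ⟨⟨u, rfl⟩, ⟨w, rfl⟩⟩ := sq_add_sq a b
    ⟨3 * t ^ 2 - 39 * d ^ 2 - 5 * (a ^ 2 + b ^ 2), by linear_combination -3 * h₁⟩
  have h₂ : t ^ 2 = 84 * (u ^ 2 + w ^ 2) + 13 * d ^ 2 :=
    mul_left_cancel₀ h7.ne_zero (by linear_combination h₁)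
  obtain ⟨-, hd⟩ := sq_add_sq t d ⟨12 * (u ^ 2 + w ^ 2) + 2 * d ^ 2, by linear_combination h₂⟩
  exact ⟨dvd_mul_right _ _, dvd_mul_right _ _, dvd_mul_right _ _, hd⟩

theorem eq_zero_of_form84_637_eq_zero {x : Fin 4 → ℚ_[7]} (hx : form84_637 x = 0) : x = 0 := by
  refine Padic.eq_zero_of_forall_integral_mem_dvd (S := {v | form84_637 v = 0}) ?_ ?_ hx
  · intro c v (hv : form84_637 v = 0)
    simp [form84_637_smul, hv]
  · intro v hv i
    have hv' : form84_637 v = 0 :=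
      Subtype.coe_injective ((map_form84_637 PadicInt.Coe.ringHom v).symm.trans hv)
    exact_mod_cast seven_dvd_of_form84_637_eq_zero hv' i

theorem stmt12 :
    ¬ ∃ x₁ x₂ y₃ y₄ : ℚ_[7], (x₁, x₂, y₃, y₄) ≠ (0, 0, 0, 0) ∧
      -84 * x₁ ^ 2 - 84 * x₂ ^ 2 + y₃ ^ 2 - 637 * y₄ ^ 2 = 0 := by
  rintro ⟨x₁, x₂, y₃, y₄, hne, heq⟩
  have hzero : ![x₁, x₂, y₃, y₄] = 0 := eq_zero_of_form84_637_eq_zero heq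
  simp only [funext_iff, Fin.forall_fin_succ] at hzero
  simp_all
end

section
/- For integers s_{ij} ≥ 2 (1 ≤ i < j ≤ 4), the real quadratic form q(a₁,...,a₄) = -(a₁² + a₂² + a₃² + a₄²) + 2Σ_{i<j}s_{ij}a_ia_j has signature (1,3) if and only if (s₁₂s₁₄+s₂₄)² - (s₁₂²-1)(s₁₄²-1) > ((s₁₂²-1)(s₁₃s₁₄+s₃₄) - (s₁₂s₁₃+s₂₃)(s₁₂s₁₄+s₂₄))² / ((s₁₂s₁₃+s₂₃)² - (s₁₂²-1)(s₁₃²-1)). -/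
open QuadraticMap in
theorem ncard_neg_weights_eq_of_sum_sq_eq {𝕜 ι V : Type*} [Field 𝕜] [LinearOrder 𝕜]
    [IsStrictOrderedRing 𝕜] [Fintype ι] [AddCommGroup V] [Module 𝕜 V]
    {T T' : V ≃ₗ[𝕜] (ι → 𝕜)} {w w' : ι → 𝕜}
    (h : ∀ a, ∑ i, w i * T a i ^ 2 = ∑ i, w' i * T' a i ^ 2) :
    {i | w i < 0}.ncard = {i | w' i < 0}.ncard := by
  have hQ : (weightedSumSquares 𝕜 w).comp (T : V →ₗ[𝕜] ι → 𝕜) =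
      (weightedSumSquares 𝕜 w').comp (T' : V →ₗ[𝕜] ι → 𝕜) := by
    ext a
    simpa [_root_.sq] using h a
  rw [← QuadraticForm.sigNeg_of_equiv_weightedSumSquares
      ⟨(isometryEquivOfCompLinearEquiv _ T).symm⟩, hQ,
    QuadraticForm.sigNeg_of_equiv_weightedSumSquares ⟨(isometryEquivOfCompLinearEquiv _ T').symm⟩]

theorem HasSignatureOneThree.ncard_neg_weights {q : (Fin 4 → ℝ) → ℝ}
    (hq : HasSignatureOneThree q) {T : (Fin 4 → ℝ) ≃ₗ[ℝ] (Fin 4 → ℝ)} {w : Fin 4 → ℝ}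
    (h : ∀ a, q a = ∑ i, w i * T a i ^ 2) : {i | w i < 0}.ncard = 3 := by
  obtain ⟨T', w', hw₀, hw, hq'⟩ := hq
  have hneg : {i | w' i < 0} = {0}ᶜ := by
    ext i
    by_cases hi : i = 0
    · simp [hi, hw₀.le]
    · simp [hi, hw i hi]
  rw [ncard_neg_weights_eq_of_sum_sq_eq fun a ↦ (h a).symm.trans (hq' a), hneg,
    Set.ncard_compl]
  simp

theorem exists_triangular_linearEquiv (e b c p q r m : ℝ) (he : e ≠ 0) :
    ∃ T : (Fin 4 → ℝ) ≃ₗ[ℝ] (Fin 4 → ℝ), ∀ a, T a =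
      ![e * a 1 + b * a 2 + c * a 3, a 0 - p * a 1 - q * a 2 - r * a 3, a 2 + m * a 3, a 3] := by
  let f := Matrix.mulVecLin !![0, e, b, c; 1, -p, -q, -r; 0, 0, 1, m; 0, 0, 0, 1]
  have hf : ∀ a, f a =
      ![e * a 1 + b * a 2 + c * a 3, a 0 - p * a 1 - q * a 2 - r * a 3, a 2 + m * a 3, a 3] := by
    intro a
    ext i
    fin_cases i <;> simp [f, Matrix.mulVec, dotProduct, Fin.sum_univ_four, sub_eq_add_neg]
  refine ⟨.ofInjectiveEndo f ((injective_iff_map_eq_zero f).2 fun a ha ↦ ?_), hf⟩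
  have h₀ := congrFun ha 0
  have h₁ := congrFun ha 1
  have h₂ := congrFun ha 2
  have h₃ := congrFun ha 3
  simp only [hf, Matrix.cons_val, Pi.zero_apply] at h₀ h₁ h₂ h₃
  have h₂' : a 2 = 0 := by simpa [h₃] using h₂
  have h₁' : a 1 = 0 := by simpa [h₂', h₃, he] using h₀
  have h₀' : a 0 = 0 := by simpa [h₁', h₂', h₃] using h₁
  ext i
  fin_cases i <;> assumption

section GramForm

variable (s₁₂ s₁₃ s₁₄ s₂₃ s₂₄ s₃₄ : ℝ)

def gramForm (a : Fin 4 → ℝ) : ℝ :=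
  -(a 0 ^ 2 + a 1 ^ 2 + a 2 ^ 2 + a 3 ^ 2)
    + 2 * (s₁₂ * a 0 * a 1 + s₁₃ * a 0 * a 2 + s₁₄ * a 0 * a 3
      + s₂₃ * a 1 * a 2 + s₂₄ * a 1 * a 3 + s₃₄ * a 2 * a 3)

/- With `G` the Gram matrix of `gramForm`, the numbers `E, A, D, B` below are `-det G_{12}`,
`-det G_{123}`, `-det G_{124}` and `-det G_{123,124}` (rows `1,2,3`, columns `1,2,4`). By the
Desnanot–Jacobi identity `A D - B² = -E det G`, so the criterion says `det G < 0`. -/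
def minorE : ℝ := s₁₂ ^ 2 - 1

def minorA : ℝ := (s₁₂ ^ 2 - 1) * (s₁₃ ^ 2 - 1) - (s₁₂ * s₁₃ + s₂₃) ^ 2

def minorB : ℝ :=
  (s₁₂ ^ 2 - 1) * (s₁₃ * s₁₄ + s₃₄) - (s₁₂ * s₁₃ + s₂₃) * (s₁₂ * s₁₄ + s₂₄)

def minorD : ℝ := (s₁₂ ^ 2 - 1) * (s₁₄ ^ 2 - 1) - (s₁₂ * s₁₄ + s₂₄) ^ 2

noncomputable def gramWeights : Fin 4 → ℝ :=
  ![1 / minorE s₁₂, -1, minorA s₁₂ s₁₃ s₂₃ / minorE s₁₂,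
    (minorA s₁₂ s₁₃ s₂₃ * minorD s₁₂ s₁₄ s₂₄ - minorB s₁₂ s₁₃ s₁₄ s₂₃ s₂₄ s₃₄ ^ 2) /
      (minorA s₁₂ s₁₃ s₂₃ * minorE s₁₂)]

theorem minorA_neg {s₁₂ s₁₃ s₂₃ : ℝ} (h₁₂ : 1 < s₁₂) (h₁₃ : 0 ≤ s₁₃) (h₂₃ : 0 ≤ s₂₃) :
    minorA s₁₂ s₁₃ s₂₃ < 0 := by
  have hA : minorA s₁₂ s₁₃ s₂₃ = 1 - s₁₂ ^ 2 - s₁₃ ^ 2 - s₂₃ ^ 2 - 2 * s₁₂ * s₁₃ * s₂₃ := by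
    unfold minorA
    ring
  rw [hA]
  nlinarith [mul_nonneg (mul_nonneg (zero_le_one.trans h₁₂.le) h₁₃) h₂₃]

theorem exists_gramForm_eq_sum_sq (hE : minorE s₁₂ ≠ 0) (hA : minorA s₁₂ s₁₃ s₂₃ ≠ 0) :
    ∃ T : (Fin 4 → ℝ) ≃ₗ[ℝ] (Fin 4 → ℝ), ∀ a, gramForm s₁₂ s₁₃ s₁₄ s₂₃ s₂₄ s₃₄ a =
      ∑ i, gramWeights s₁₂ s₁₃ s₁₄ s₂₃ s₂₄ s₃₄ i * T a i ^ 2 := by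
  obtain ⟨T, hT⟩ := exists_triangular_linearEquiv (minorE s₁₂) (s₁₂ * s₁₃ + s₂₃)
    (s₁₂ * s₁₄ + s₂₄) s₁₂ s₁₃ s₁₄ (minorB s₁₂ s₁₃ s₁₄ s₂₃ s₂₄ s₃₄ / minorA s₁₂ s₁₃ s₂₃) hE
  refine ⟨T, fun a ↦ ?_⟩
  simp only [Fin.sum_univ_four, hT, gramWeights, Matrix.cons_val]
  unfold gramForm minorB minorD
  field_simp
  unfold minorE minorA
  ring

theorem hasSignatureOneThree_gramForm_iff (hE : 0 < minorE s₁₂) (hA : minorA s₁₂ s₁₃ s₂₃ < 0) :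
    HasSignatureOneThree (gramForm s₁₂ s₁₃ s₁₄ s₂₃ s₂₄ s₃₄) ↔
      0 < minorA s₁₂ s₁₃ s₂₃ * minorD s₁₂ s₁₄ s₂₄ - minorB s₁₂ s₁₃ s₁₄ s₂₃ s₂₄ s₃₄ ^ 2 := by
  obtain ⟨T, hT⟩ := exists_gramForm_eq_sum_sq s₁₂ s₁₃ s₁₄ s₂₃ s₂₄ s₃₄ hE.ne' hA.ne
  have hAE : minorA s₁₂ s₁₃ s₂₃ * minorE s₁₂ < 0 := mul_neg_of_neg_of_pos hA hE
  constructor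
  · intro hq
    by_contra! hAD
    have hneg : {i | gramWeights s₁₂ s₁₃ s₁₄ s₂₃ s₂₄ s₃₄ i < 0} ⊆ {1, 2} := by
      intro i hi
      fin_cases i
      · simp [gramWeights] at hi
        linarith
      · simp
      · simp
      · simp [gramWeights] at hi
        linarith [div_nonneg_of_nonpos hAD hAE.le]
    have hcard := Set.ncard_le_ncard hneg
    rw [hq.ncard_neg_weights hT, Set.ncard_pair (by decide)] at hcard
    omega
  · intro hAD
    refine ⟨T, _, by simpa [gramWeights] using hE, fun i hi ↦ ?_, hT⟩
    fin_cases i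
    · exact absurd rfl hi
    · simp [gramWeights]
    · simpa [gramWeights] using div_neg_of_neg_of_pos hA hE
    · simpa [gramWeights] using div_neg_of_pos_of_neg hAD hAE

end GramForm

theorem stmt14_general (s₁₂ s₁₃ s₁₄ s₂₃ s₂₄ s₃₄ : ℤ)
    (h12 : 2 ≤ s₁₂) (h13 : 2 ≤ s₁₃)
    (h23 : 2 ≤ s₂₃) :
    HasSignatureOneThree (fun a : Fin 4 → ℝ =>
      -(a 0 ^ 2 + a 1 ^ 2 + a 2 ^ 2 + a 3 ^ 2)
        + 2 * ((s₁₂ : ℝ) * a 0 * a 1 + (s₁₃ : ℝ) * a 0 * a 2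
          + (s₁₄ : ℝ) * a 0 * a 3 + (s₂₃ : ℝ) * a 1 * a 2
          + (s₂₄ : ℝ) * a 1 * a 3 + (s₃₄ : ℝ) * a 2 * a 3)) ↔
    ((s₁₂ : ℝ) * s₁₄ + s₂₄) ^ 2 - ((s₁₂ : ℝ) ^ 2 - 1) * ((s₁₄ : ℝ) ^ 2 - 1) >
      (((s₁₂ : ℝ) ^ 2 - 1) * ((s₁₃ : ℝ) * s₁₄ + s₃₄)
          - ((s₁₂ : ℝ) * s₁₃ + s₂₃) * ((s₁₂ : ℝ) * s₁₄ + s₂₄)) ^ 2 /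
        (((s₁₂ : ℝ) * s₁₃ + s₂₃) ^ 2 - ((s₁₂ : ℝ) ^ 2 - 1) * ((s₁₃ : ℝ) ^ 2 - 1)) := by
  have h₁₂ : (2 : ℝ) ≤ s₁₂ := by exact_mod_cast h12
  have h₁₃ : (2 : ℝ) ≤ s₁₃ := by exact_mod_cast h13
  have h₂₃ : (2 : ℝ) ≤ s₂₃ := by exact_mod_cast h23
  have hE : 0 < minorE (s₁₂ : ℝ) := by
    unfold minorE
    nlinarith
  have hA : minorA (s₁₂ : ℝ) s₁₃ s₂₃ < 0 := minorA_neg (by linarith) (by linarith) (by linarith)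
  refine (hasSignatureOneThree_gramForm_iff (s₁₂ : ℝ) s₁₃ s₁₄ s₂₃ s₂₄ s₃₄ hE hA).trans ?_
  rw [gt_iff_lt, div_lt_iff₀ (by unfold minorA at hA; linarith)]
  unfold minorA minorB minorD
  constructor <;> intro h <;> linarith

theorem stmt14 (s₁₂ s₁₃ s₁₄ s₂₃ s₂₄ s₃₄ : ℤ)
    (h12 : 2 ≤ s₁₂) (h13 : 2 ≤ s₁₃) (h14 : 2 ≤ s₁₄)
    (h23 : 2 ≤ s₂₃) (h24 : 2 ≤ s₂₄) (h34 : 2 ≤ s₃₄) :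
    HasSignatureOneThree (fun a : Fin 4 → ℝ =>
      -(a 0 ^ 2 + a 1 ^ 2 + a 2 ^ 2 + a 3 ^ 2)
        + 2 * ((s₁₂ : ℝ) * a 0 * a 1 + (s₁₃ : ℝ) * a 0 * a 2
          + (s₁₄ : ℝ) * a 0 * a 3 + (s₂₃ : ℝ) * a 1 * a 2
          + (s₂₄ : ℝ) * a 1 * a 3 + (s₃₄ : ℝ) * a 2 * a 3)) ↔
    ((s₁₂ : ℝ) * s₁₄ + s₂₄) ^ 2 - ((s₁₂ : ℝ) ^ 2 - 1) * ((s₁₄ : ℝ) ^ 2 - 1) >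
      (((s₁₂ : ℝ) ^ 2 - 1) * ((s₁₃ : ℝ) * s₁₄ + s₃₄)
          - ((s₁₂ : ℝ) * s₁₃ + s₂₃) * ((s₁₂ : ℝ) * s₁₄ + s₂₄)) ^ 2 /
        (((s₁₂ : ℝ) * s₁₃ + s₂₃) ^ 2 - ((s₁₂ : ℝ) ^ 2 - 1) * ((s₁₃ : ℝ) ^ 2 - 1)) :=
  stmt14_general s₁₂ s₁₃ s₁₄ s₂₃ s₂₄ s₃₄ h12 h13 h23
end

section
/- For a, b, c nonzero elements of a field K of characteristic ≠ 2, if the equation a·x² + b·y² = z² has a nontrivial solution in K, then for any nonzero a' ∈ K, the equation a·a'·x² + b·y² = z² has a nontrivial solution if and only if a'·x² + b·y² = z² does. -/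
/-!
If `b` is a square `s²`, every conic `c x² + b y² = z²` has the point `(0, 1, s)`. Otherwise a
nontrivial point must have `x ≠ 0`, so the conic is solvable iff `c` is a value `z² - b y²` of
the norm form of `K(√b)`. These values are closed under products and inverses, and `a` is one
of them, so `a a'` is one iff `a'` is.
-/

section

variable {K : Type*} [Field K]

def ConicSolvable (c b : K) : Prop :=
  ∃ x y z : K, (x, y, z) ≠ (0, 0, 0) ∧ c * x ^ 2 + b * y ^ 2 = z ^ 2

def IsNorm (b c : K) : Prop :=
  ∃ y z : K, c = z ^ 2 - b * y ^ 2

theorem IsNorm.mul {b c d : K} (hc : IsNorm b c) (hd : IsNorm b d) : IsNorm b (c * d) := by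
  obtain ⟨y₁, z₁, rfl⟩ := hc
  obtain ⟨y₂, z₂, rfl⟩ := hd
  exact ⟨z₁ * y₂ + y₁ * z₂, z₁ * z₂ + b * y₁ * y₂, by ring⟩

theorem IsNorm.inv {b c : K} (hc : IsNorm b c) (hc₀ : c ≠ 0) : IsNorm b c⁻¹ := by
  obtain ⟨y, z, rfl⟩ := hc
  exact ⟨y / (z ^ 2 - b * y ^ 2), z / (z ^ 2 - b * y ^ 2), by field_simp⟩

theorem conicSolvable_of_isSquare {b : K} (hb : IsSquare b) (c : K) : ConicSolvable c b := by
  obtain ⟨s, rfl⟩ := hb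
  exact ⟨0, 1, s, by simp, by ring⟩

theorem conicSolvable_iff_isNorm {b : K} (hb : ¬IsSquare b) (c : K) :
    ConicSolvable c b ↔ IsNorm b c := by
  constructor
  · rintro ⟨x, y, z, hxyz, hconic⟩
    have hx : x ≠ 0 := by
      rintro rfl
      have hy : y ≠ 0 := by
        rintro rfl
        have hz : z = 0 := pow_eq_zero_iff two_ne_zero |>.mp (by linear_combination -hconic)
        exact hxyz (by rw [hz])
      exact hb ⟨z / y, by field_simp; linear_combination hconic⟩
    exact ⟨y / x, z / x, by field_simp; linear_combination hconic⟩
  · rintro ⟨y, z, rfl⟩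
    exact ⟨1, y, z, by simp, by ring⟩

end

theorem stmt15_general (K : Type*) [Field K]
    (a b : K) (ha : a ≠ 0)
    (h : ∃ x y z : K, (x, y, z) ≠ (0, 0, 0) ∧ a * x ^ 2 + b * y ^ 2 = z ^ 2)
    (a' : K) :
    (∃ x y z : K, (x, y, z) ≠ (0, 0, 0) ∧ a * a' * x ^ 2 + b * y ^ 2 = z ^ 2) ↔
    (∃ x y z : K, (x, y, z) ≠ (0, 0, 0) ∧ a' * x ^ 2 + b * y ^ 2 = z ^ 2) := by
  change ConicSolvable a b at h
  change ConicSolvable (a * a') b ↔ ConicSolvable a' b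
  by_cases hb : IsSquare b
  · exact iff_of_true (conicSolvable_of_isSquare hb _) (conicSolvable_of_isSquare hb _)
  simp only [conicSolvable_iff_isNorm hb] at h ⊢
  refine ⟨fun haa' => ?_, h.mul⟩
  simpa only [inv_mul_cancel_left₀ ha] using (h.inv ha).mul haa'

theorem stmt15 (K : Type*) [Field K] (hchar : (2 : K) ≠ 0)
    (a b : K) (ha : a ≠ 0) (hb : b ≠ 0)
    (h : ∃ x y z : K, (x, y, z) ≠ (0, 0, 0) ∧ a * x ^ 2 + b * y ^ 2 = z ^ 2)
    (a' : K) (ha' : a' ≠ 0) :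
    (∃ x y z : K, (x, y, z) ≠ (0, 0, 0) ∧ a * a' * x ^ 2 + b * y ^ 2 = z ^ 2) ↔
    (∃ x y z : K, (x, y, z) ≠ (0, 0, 0) ∧ a' * x ^ 2 + b * y ^ 2 = z ^ 2) :=
  stmt15_general K a b ha h a'
end
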